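/- Let v_{−1}, v_0, v_1, v_2, … be complex numbers satisfying the cubic relation (1/4)·v_{−1}³ − v_0·v_{−1} + v_1 = 0, and let v = 2T^{−2} + Σ_{n≥−1} v_n T^n be the corresponding formal Laurent series over ℂ. Then there exists a formal power series U ∈ ℂ[[T]] such that, with u = −T^{−1} + U, one has u² + u′ = v (formal derivative in T). -/

import Mathlib

/-- The formal derivative of a Laurent series: `(Σ aₙ Tⁿ)' = Σ n aₙ Tⁿ⁻¹`. -/
noncomputable def lderiv (f : LaurentSeries ℂ) : LaurentSeries ℂ :=
  HahnSeries.single (-1 : ℤ) (1 : ℂ) *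
    { coeff := fun n => (n : ℂ) * f.coeff n
      isPWO_support' := f.isPWO_support'.mono (by
        intro n hn
        simp only [Function.mem_support] at hn ⊢
        exact fun h => hn (by rw [h, mul_zero])) }

/-! Write `u = -T⁻¹ + Σ cₘ Tᵐ`. The coefficient of `Tᵐ⁻¹` in `u² + u′` is
`2·[m = 0] + (m - 2) cₘ + Σ_{i+j=m-1} cᵢ cⱼ`, and the sum only involves `cᵢ` with `i < m`, so
matching it with `v` determines every `cₘ` with `m ≠ 2` recursively. At `m = 2` the term in `c₂`
drops out and the equation reads `2 c₀ c₁ = v₁`; since `c₀ = -v₋₁/2` and `c₁ = v₋₁²/4 - v₀`, this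
is exactly the cubic relation. -/

open PowerSeries

section Recursion

variable {K : Type*} [Field K]

/-- At `k = 1` the denominator vanishes, so `c₂ = 0`: any value of `c₂` would do. -/
noncomputable def miuraCoeff (w : ℕ → K) : ℕ → K
  | 0 => -w 0 / 2
  | k + 1 =>
    (w (k + 1) - ∑ i : Fin (k + 1), miuraCoeff w i * miuraCoeff w (k - i)) / ((k : K) - 1)
  decreasing_by all_goals omega

theorem coeff_sq_mk_miuraCoeff (w : ℕ → K) (k : ℕ) :
    coeff k (PowerSeries.mk (miuraCoeff w) ^ 2) =
      ∑ i : Fin (k + 1), miuraCoeff w i * miuraCoeff w (k - i) := by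
  rw [sq, coeff_mul, Finset.Nat.sum_antidiagonal_eq_sum_range_succ_mk,
    ← Fin.sum_univ_eq_sum_range]
  simp only [coeff_mk]

theorem exists_powerSeries_coeff_miura_eq [CharZero K] (w : ℕ → K)
    (hw : (1 / 4) * w 0 ^ 3 - w 1 * w 0 + w 2 = 0) :
    ∃ U : K⟦X⟧, ∀ m : ℕ, ((m : K) - 2) * coeff m U + coeff m (X * U ^ 2) = w m := by
  refine ⟨PowerSeries.mk (miuraCoeff w), fun m => ?_⟩
  rcases m with _ | k
  · simp only [coeff_mk, coeff_zero_X_mul, miuraCoeff]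
    ring
  rw [coeff_succ_X_mul, coeff_sq_mk_miuraCoeff, coeff_mk]
  by_cases hk : k = 1
  · subst hk
    have hc₀ : miuraCoeff w 0 = -w 0 / 2 := by rw [miuraCoeff]
    have hc₁ : miuraCoeff w 1 = w 0 ^ 2 / 4 - w 1 := by
      rw [miuraCoeff, Fin.sum_univ_one, Fin.val_zero, hc₀]
      ring
    rw [Fin.sum_univ_two, Fin.val_zero, Fin.val_one, Nat.sub_zero, Nat.sub_self, hc₀, hc₁]
    push_cast
    linear_combination (-1) * hw
  · have hk' : (k : K) - 1 ≠ 0 := sub_ne_zero.mpr (by exact_mod_cast hk)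
    rw [miuraCoeff]
    push_cast
    field_simp
    ring

end Recursion

open HahnSeries

theorem lderiv_coeff_sub_one (f : LaurentSeries ℂ) (n : ℤ) :
    (lderiv f).coeff (n - 1) = n * f.coeff n := by
  simp [lderiv, coeff_single_mul]

theorem coeff_miura_sub_one (U : ℂ⟦X⟧) (n : ℤ) :
    ((-single (-1 : ℤ) (1 : ℂ) + ofPowerSeries ℤ ℂ U) ^ 2 +
        lderiv (-single (-1 : ℤ) (1 : ℂ) + ofPowerSeries ℤ ℂ U)).coeff (n - 1) =
      (if n = -1 then 2 else 0) + (n - 2) * (ofPowerSeries ℤ ℂ U).coeff n +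
        (ofPowerSeries ℤ ℂ (X * U ^ 2)).coeff n := by
  set s : LaurentSeries ℂ := single (-1) 1
  set W := ofPowerSeries ℤ ℂ U
  have hX : ofPowerSeries ℤ ℂ (X * U ^ 2) = single 1 1 * W ^ 2 := by
    rw [map_mul, map_pow, ofPowerSeries_X]
  have hsq : (-s + W) ^ 2 = s * s - (s * W + s * W) + W ^ 2 := by ring
  rw [hX, coeff_add, lderiv_coeff_sub_one, hsq]
  simp only [coeff_add, coeff_sub, coeff_neg, coeff_single_mul, s, coeff_single]
  split_ifs <;> simp_all <;> ring

theorem exists_miura_datum_of_cubic (V : LaurentSeries ℂ)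
    (h₂ : V.coeff (-2) = 2)
    (hlow : ∀ n : ℤ, n < -2 → V.coeff n = 0)
    (hcubic : (1 / 4 : ℂ) * (V.coeff (-1)) ^ 3 - V.coeff 0 * V.coeff (-1) + V.coeff 1 = 0) :
    ∃ U : PowerSeries ℂ,
      (-(HahnSeries.single (-1 : ℤ) (1 : ℂ)) + HahnSeries.ofPowerSeries ℤ ℂ U) ^ 2 +
        lderiv (-(HahnSeries.single (-1 : ℤ) (1 : ℂ)) + HahnSeries.ofPowerSeries ℤ ℂ U) = V := by
  obtain ⟨U, hU⟩ :=
    exists_powerSeries_coeff_miura_eq (fun m : ℕ => V.coeff (m - 1)) (by simpa using hcubic)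
  refine ⟨U, ?_⟩
  ext n
  obtain ⟨n, rfl⟩ : ∃ k : ℤ, n = k - 1 := ⟨n + 1, by ring⟩
  rw [coeff_miura_sub_one]
  rcases lt_trichotomy n (-1) with hn | rfl | hn
  · simp only [PowerSeries.coeff_coe]
    simp [hn.ne, show n < 0 by omega, hlow (n - 1) (by omega)]
  · simp only [PowerSeries.coeff_coe]
    norm_num [h₂]
  · obtain ⟨m, rfl⟩ := Int.eq_ofNat_of_zero_le (show 0 ≤ n by omega)
    rw [ofPowerSeries_apply_coeff, ofPowerSeries_apply_coeff, if_neg (by omega), ← hU m]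
    simp
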